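/- Let k ≥ 2, σ_i = i(k−i)/2, and let f : ℝ^k → ℝ^k be the right-hand side of system (P), i.e. f_1(ξ) = −σ₁(e^{−(ξ₂−ξ₁)} − 1), f_i(ξ) = σ_{i−1}(e^{−(ξ_i−ξ_{i−1})} − 1) − σ_i(e^{−(ξ_{i+1}−ξ_i)} − 1) for 2 ≤ i ≤ k−1, and f_k(ξ) = σ_{k−1}(e^{−(ξ_k−ξ_{k−1})} − 1). Let η > 0, C₀ > 0 and τ₀ ≥ 0. Then for every ε > 0 there exists τ̂ ≥ τ₀, depending only on k, η, C₀, τ₀ and ε, such that every C¹ function ξ : [τ₀, ∞) → ℝ^k satisfying, for all τ ≥ τ₀, ∑_{i=1}^k ξ_i(τ) = 0, ‖ξ(τ)‖ ≤ C₀ and ‖ξ'(τ) − f(ξ(τ))‖ ≤ C₀·e^{−ητ}, verifies max_{1≤i≤k} |ξ_i(τ̂)| ≤ ε. -/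

import Mathlib

/-!
The energy `W = ‖ξ‖²` is a Lyapunov function. Summation by parts gives
`⟨x, f(x)⟩ = -∑ σᵢ (1 - e^{-dᵢ}) dᵢ` with `dᵢ = x_{i+1} - xᵢ`; since `(1 - e^{-d}) d ≥ e^{-|d|} d²`,
`σᵢ ≥ (k-1)/2`, and a zero-sum vector is controlled by its consecutive differences
(`‖x‖² ≤ k(k-1) ∑ dᵢ²`), this dissipation is at least `e^{-2C₀} ‖x‖² / (2k)` on the ball of
radius `C₀`. With Cauchy–Schwarz on the perturbation, `W' ≤ -r W + 2C₀² e^{-ητ}` for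
`r = e^{-2C₀}/k`. Once the forcing is below `r ε²/2`, comparing `W` with the barrier
`ε²/2 + C₀² e^{-r(τ-τ₁)}` shows `W ≤ ε²` after a time depending only on the data.
-/

/-- `σᵢ = i(k-i)/2` (so that `σ₀ = σ_k = 0`). -/
noncomputable def sig (k i : ℕ) : ℝ := (i : ℝ) * ((k : ℝ) - (i : ℝ)) / 2

/-- The right-hand side of system (P): for `i = 1,…,k`,
`fᵢ(ξ) = σᵢ₋₁(e^{-(ξᵢ-ξᵢ₋₁)} - 1) - σᵢ(e^{-(ξᵢ₊₁-ξᵢ)} - 1)`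
(the conventions for `i = 1` and `i = k` are automatic since `σ₀ = σ_k = 0`). -/
noncomputable def fP (k : ℕ) (ξ : ℕ → ℝ) (i : ℕ) : ℝ :=
  sig k (i - 1) * (Real.exp (-(ξ i - ξ (i - 1))) - 1)
    - sig k i * (Real.exp (-(ξ (i + 1) - ξ i)) - 1)

open Finset Real

lemma sig_zero (k : ℕ) : sig k 0 = 0 := by simp [sig]

lemma sig_self (k : ℕ) : sig k k = 0 := by simp [sig]

lemma sub_one_div_two_le_sig {k i : ℕ} (h1 : 1 ≤ i) (h2 : i + 1 ≤ k) :
    ((k : ℝ) - 1) / 2 ≤ sig k i := by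
  have h1' : (1 : ℝ) ≤ i := by exact_mod_cast h1
  have h2' : (i : ℝ) + 1 ≤ k := by exact_mod_cast h2
  unfold sig
  nlinarith

lemma exp_neg_abs_mul_sq_le (d : ℝ) : exp (-|d|) * d ^ 2 ≤ (1 - exp (-d)) * d := by
  rcases le_total 0 d with hd | hd
  · have h : exp (-d) * (d + 1) ≤ 1 :=
      calc exp (-d) * (d + 1) ≤ exp (-d) * exp d := by gcongr; exact add_one_le_exp d
        _ = 1 := by rw [← exp_add, neg_add_cancel, exp_zero]
    rw [abs_of_nonneg hd]
    nlinarith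
  · have h := add_one_le_exp (-d)
    rw [abs_of_nonpos hd, neg_neg]
    nlinarith [exp_le_one_iff.mpr hd, exp_pos d, sq_nonneg d]

noncomputable def dissipation (k : ℕ) (x : ℕ → ℝ) : ℝ :=
  ∑ i ∈ Icc 1 (k - 1), sig k i * ((1 - exp (-(x (i + 1) - x i))) * (x (i + 1) - x i))

lemma sum_Icc_mul_sub_eq (x g : ℕ → ℝ) (n : ℕ) :
    ∑ i ∈ Icc 1 (n + 1), x i * (g (i - 1) - g i)
      = x 1 * g 0 - x (n + 1) * g (n + 1) + ∑ i ∈ Icc 1 n, (x (i + 1) - x i) * g i := by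
  induction n with
  | zero => simp [mul_sub]
  | succ n ih =>
    rw [sum_Icc_succ_top (by omega), ih, sum_Icc_succ_top (by omega)]
    simp only [Nat.add_sub_cancel]
    ring

lemma sum_mul_fP {k : ℕ} (hk : 1 ≤ k) (x : ℕ → ℝ) :
    ∑ i ∈ Icc 1 k, x i * fP k x i = -dissipation k x := by
  set g : ℕ → ℝ := fun i => sig k i * (exp (-(x (i + 1) - x i)) - 1)
  obtain ⟨n, rfl⟩ : ∃ n, k = n + 1 := ⟨k - 1, by omega⟩
  have hf : ∀ i ∈ Icc 1 (n + 1), x i * fP (n + 1) x i = x i * (g (i - 1) - g i) := by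
    intro i hi
    obtain ⟨j, rfl⟩ : ∃ j, i = j + 1 := ⟨i - 1, by have := (mem_Icc.1 hi).1; omega⟩
    simp [fP, g]
  rw [sum_congr rfl hf, sum_Icc_mul_sub_eq, dissipation, ← sum_neg_distrib]
  simp only [g, sig_zero, sig_self, Nat.add_sub_cancel, zero_mul, mul_zero, sub_zero, zero_add]
  exact sum_congr rfl fun i _ => by ring

lemma abs_sub_le_sum_abs_sub (x : ℕ → ℝ) {k i j : ℕ} (hi : i ∈ Icc 1 k) (hj : j ∈ Icc 1 k) :
    |x i - x j| ≤ ∑ l ∈ Icc 1 (k - 1), |x (l + 1) - x l| := by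
  wlog hij : i ≤ j generalizing i j
  · rw [abs_sub_comm]; exact this hj hi (by omega)
  rw [mem_Icc] at hi hj
  calc |x i - x j| = dist (x i) (x j) := (dist_eq _ _).symm
    _ ≤ ∑ l ∈ Ico i j, dist (x l) (x (l + 1)) := dist_le_Ico_sum_dist x hij
    _ = ∑ l ∈ Ico i j, |x (l + 1) - x l| := sum_congr rfl fun l _ => by rw [dist_comm, dist_eq]
    _ ≤ ∑ l ∈ Icc 1 (k - 1), |x (l + 1) - x l| :=
      sum_le_sum_of_subset_of_nonneg (fun l hl => by simp only [mem_Ico, mem_Icc] at hl ⊢; omega)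
        fun _ _ _ => abs_nonneg _

lemma abs_le_of_sum_eq_zero {ι : Type*} {s : Finset ι} {x : ι → ℝ} {S : ℝ}
    (hsum : ∑ j ∈ s, x j = 0) (h : ∀ i ∈ s, ∀ j ∈ s, |x i - x j| ≤ S) {i : ι} (hi : i ∈ s) :
    |x i| ≤ S := by
  have hcard : (0 : ℝ) < #s := by exact_mod_cast card_pos.2 ⟨i, hi⟩
  have hmul : #s * x i = ∑ j ∈ s, (x i - x j) := by
    rw [sum_sub_distrib, hsum, sum_const, nsmul_eq_mul, sub_zero]
  have hmul_le : #s * |x i| ≤ #s * S :=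
    calc #s * |x i| = |∑ j ∈ s, (x i - x j)| := by rw [← hmul, abs_mul, abs_of_pos hcard]
      _ ≤ ∑ j ∈ s, |x i - x j| := abs_sum_le_sum_abs _ _
      _ ≤ ∑ _j ∈ s, S := sum_le_sum fun j hj => h i hi j hj
      _ = #s * S := by rw [sum_const, nsmul_eq_mul]
  exact le_of_mul_le_mul_left hmul_le hcard

lemma sum_sq_le_mul_sum_sq_sub {k : ℕ} (hk : 1 ≤ k) {x : ℕ → ℝ}
    (hsum : ∑ i ∈ Icc 1 k, x i = 0) :
    ∑ i ∈ Icc 1 k, x i ^ 2 ≤ k * (k - 1) * ∑ i ∈ Icc 1 (k - 1), (x (i + 1) - x i) ^ 2 := by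
  set S := ∑ l ∈ Icc 1 (k - 1), |x (l + 1) - x l|
  have hS : S ^ 2 ≤ (k - 1) * ∑ i ∈ Icc 1 (k - 1), (x (i + 1) - x i) ^ 2 := by
    have := sq_sum_le_card_mul_sum_sq (s := Icc 1 (k - 1)) (f := fun l => |x (l + 1) - x l|)
    simpa [Nat.cast_sub hk, sq_abs] using this
  calc ∑ i ∈ Icc 1 k, x i ^ 2 ≤ ∑ _i ∈ Icc 1 k, S ^ 2 := sum_le_sum fun i hi => by
        have hxi := abs_le_of_sum_eq_zero hsum
          (fun i hi j hj => abs_sub_le_sum_abs_sub x hi hj) hi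
        exact sq_le_sq' (by linarith [abs_le.1 hxi]) (abs_le.1 hxi).2
    _ = k * S ^ 2 := by simp
    _ ≤ k * ((k - 1) * ∑ i ∈ Icc 1 (k - 1), (x (i + 1) - x i) ^ 2) := by gcongr
    _ = _ := by ring

lemma exp_mul_sum_sq_le_dissipation {k : ℕ} (hk : 1 ≤ k) {x : ℕ → ℝ} {R : ℝ}
    (hsum : ∑ i ∈ Icc 1 k, x i = 0) (hR : ∀ i ∈ Icc 1 k, |x i| ≤ R) :
    exp (-(2 * R)) * ∑ i ∈ Icc 1 k, x i ^ 2 ≤ 2 * k * dissipation k x := by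
  have hterm : ∀ i ∈ Icc 1 (k - 1), ((k : ℝ) - 1) / 2 * (exp (-(2 * R)) * (x (i + 1) - x i) ^ 2)
      ≤ sig k i * ((1 - exp (-(x (i + 1) - x i))) * (x (i + 1) - x i)) := by
    intro i hi
    rw [mem_Icc] at hi
    have hd : |x (i + 1) - x i| ≤ 2 * R := by
      have := abs_sub (x (i + 1)) (x i)
      linarith [hR (i + 1) (mem_Icc.2 ⟨by omega, by omega⟩), hR i (mem_Icc.2 ⟨hi.1, by omega⟩)]
    have hk1 : (0 : ℝ) ≤ (k - 1) / 2 := by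
      have : (1 : ℝ) ≤ k := by exact_mod_cast hk
      linarith
    exact mul_le_mul (sub_one_div_two_le_sig hi.1 (by omega))
      ((mul_le_mul_of_nonneg_right (exp_le_exp.2 (neg_le_neg hd)) (sq_nonneg _)).trans
        (exp_neg_abs_mul_sq_le _))
      (by positivity) (hk1.trans (sub_one_div_two_le_sig hi.1 (by omega)))
  calc exp (-(2 * R)) * ∑ i ∈ Icc 1 k, x i ^ 2
      ≤ exp (-(2 * R)) * (k * (k - 1) * ∑ i ∈ Icc 1 (k - 1), (x (i + 1) - x i) ^ 2) := by
        gcongr; exact sum_sq_le_mul_sum_sq_sub hk hsum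
    _ = 2 * k * ∑ i ∈ Icc 1 (k - 1),
          ((k : ℝ) - 1) / 2 * (exp (-(2 * R)) * (x (i + 1) - x i) ^ 2) := by
        rw [← mul_sum, ← mul_sum]; ring
    _ ≤ 2 * k * dissipation k x := by gcongr; exact sum_le_sum hterm

lemma abs_le_sqrt_sum_sq {ι : Type*} {s : Finset ι} (x : ι → ℝ) {i : ι} (hi : i ∈ s) :
    |x i| ≤ √(∑ j ∈ s, x j ^ 2) :=
  abs_le_sqrt (single_le_sum (f := fun j => x j ^ 2) (fun _ _ => sq_nonneg _) hi)

lemma two_mul_sum_mul_le_of_near_fP {k : ℕ} (hk : 1 ≤ k) {x y : ℕ → ℝ} {C E : ℝ}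
    (hsum : ∑ i ∈ Icc 1 k, x i = 0) (hx : √(∑ i ∈ Icc 1 k, x i ^ 2) ≤ C)
    (hy : √(∑ i ∈ Icc 1 k, (y i - fP k x i) ^ 2) ≤ E) :
    2 * ∑ i ∈ Icc 1 k, x i * y i ≤ -(exp (-(2 * C)) / k) * ∑ i ∈ Icc 1 k, x i ^ 2 + 2 * C * E := by
  have hcoer := exp_mul_sum_sq_le_dissipation hk hsum fun i hi => (abs_le_sqrt_sum_sq x hi).trans hx
  have hpert : ∑ i ∈ Icc 1 k, x i * (y i - fP k x i) ≤ C * E :=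
    (sum_mul_le_sqrt_mul_sqrt _ _ _).trans
      (mul_le_mul hx hy (sqrt_nonneg _) ((sqrt_nonneg _).trans hx))
  have hsplit : ∑ i ∈ Icc 1 k, x i * y i
      = ∑ i ∈ Icc 1 k, x i * (y i - fP k x i) - dissipation k x := by
    simp only [mul_sub, sum_sub_distrib, sum_mul_fP hk x]
    ring
  have hk0 : (0 : ℝ) < k := by exact_mod_cast hk
  have hdecay : exp (-(2 * C)) / k * ∑ i ∈ Icc 1 k, x i ^ 2 ≤ 2 * dissipation k x := by
    rw [div_mul_eq_mul_div, div_le_iff₀ hk0]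
    linarith
  linarith

lemma le_add_mul_exp_of_hasDerivAt {W W' : ℝ → ℝ} {t₀ t₁ r a M : ℝ} (ht : t₀ ≤ t₁)
    (hW : ∀ s ∈ Set.Icc t₀ t₁, HasDerivAt W (W' s) s)
    (hW' : ∀ s ∈ Set.Icc t₀ t₁, W' s < -r * (W s - a)) (h₀ : W t₀ ≤ a + M) :
    W t₁ ≤ a + M * exp (-r * (t₁ - t₀)) := by
  have hB : ∀ s, HasDerivAt (fun t => a + M * exp (-r * (t - t₀)))
      (M * (exp (-r * (s - t₀)) * -r)) s := fun s => by
    simpa using ((((hasDerivAt_id s).sub_const t₀).const_mul (-r)).exp.const_mul M).const_add a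
  refine image_le_of_deriv_right_lt_deriv_boundary (B := fun t => a + M * exp (-r * (t - t₀)))
    (fun s hs => (hW s hs).continuousAt.continuousWithinAt)
    (fun s hs => (hW s (Set.Ico_subset_Icc_self hs)).hasDerivWithinAt) (by simpa using h₀) hB
    (fun s hs hWs => ?_) (Set.right_mem_Icc.2 ht)
  have := hW' s (Set.Ico_subset_Icc_self hs)
  rw [hWs] at this
  linarith

lemma exists_forall_ge_mul_exp_lt {r : ℝ} (hr : 0 < r) (C s t₀ : ℝ) {ε : ℝ} (hε : 0 < ε) :
    ∃ T ≥ t₀, ∀ t ≥ T, C * exp (-r * (t - s)) < ε := by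
  have hlim : Filter.Tendsto (fun t => C * exp (-r * (t - s))) Filter.atTop (nhds 0) := by
    simpa [sub_eq_add_neg] using (tendsto_exp_atBot.comp
      ((Filter.tendsto_atTop_add_const_right _ (-s) Filter.tendsto_id).const_mul_atTop_of_neg
        (neg_neg_of_pos hr)) |>.const_mul C)
  obtain ⟨T, hT⟩ := Filter.eventually_atTop.1 (hlim.eventually (gt_mem_nhds hε))
  exact ⟨max T t₀, le_max_right _ _, fun t ht => hT t ((le_max_left _ _).trans ht)⟩

theorem stmt17_general (k : ℕ) (hk : 2 ≤ k) (η C₀ τ₀ : ℝ)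
    (hη : 0 < η) :
    ∀ ε > 0, ∃ τhat : ℝ, τ₀ ≤ τhat ∧
      ∀ ξ ξ' : ℕ → ℝ → ℝ,
        (∀ i, 1 ≤ i → i ≤ k → ∀ τ : ℝ, τ₀ ≤ τ → HasDerivAt (ξ i) (ξ' i τ) τ) →
        (∀ τ : ℝ, τ₀ ≤ τ → ∑ i ∈ Finset.Icc 1 k, ξ i τ = 0) →
        (∀ τ : ℝ, τ₀ ≤ τ →
          Real.sqrt (∑ i ∈ Finset.Icc 1 k, (ξ i τ) ^ 2) ≤ C₀) →
        (∀ τ : ℝ, τ₀ ≤ τ →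
          Real.sqrt (∑ i ∈ Finset.Icc 1 k, (ξ' i τ - fP k (fun j => ξ j τ) i) ^ 2)
            ≤ C₀ * Real.exp (-η * τ)) →
        ∀ i, 1 ≤ i → i ≤ k → |ξ i τhat| ≤ ε := by
  intro ε hε
  set r := exp (-(2 * C₀)) / k
  have hr : 0 < r := div_pos (exp_pos _) (by exact_mod_cast (by omega : 0 < k))
  set a := ε ^ 2 / 2 with ha_def
  have ha : 0 < a := by positivity
  obtain ⟨τ₁, hτ₀₁, hτ₁⟩ := exists_forall_ge_mul_exp_lt hη (2 * C₀ ^ 2) 0 τ₀ (mul_pos hr ha)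
  obtain ⟨τhat, hτ₁hat, hhat⟩ := exists_forall_ge_mul_exp_lt hr (C₀ ^ 2) τ₁ τ₁ ha
  refine ⟨τhat, hτ₀₁.trans hτ₁hat, fun ξ ξ' hderiv hsum hnorm herr i hi1 hik => ?_⟩
  have hW : ∀ t, τ₀ ≤ t → HasDerivAt (fun t => ∑ j ∈ Icc 1 k, ξ j t ^ 2)
      (2 * ∑ j ∈ Icc 1 k, ξ j t * ξ' j t) t := fun t ht => by
    simpa [mul_sum, mul_assoc, mul_comm, mul_left_comm] using HasDerivAt.fun_sum fun j hj =>
      (hderiv j (mem_Icc.1 hj).1 (mem_Icc.1 hj).2 t ht).pow 2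
  have hdecay := le_add_mul_exp_of_hasDerivAt (r := r) (a := a) (M := C₀ ^ 2) hτ₁hat
    (fun s hs => hW s (hτ₀₁.trans hs.1)) (fun s hs => by
      have hs₀ := hτ₀₁.trans hs.1
      have henergy :=
        two_mul_sum_mul_le_of_near_fP (by omega) (hsum s hs₀) (hnorm s hs₀) (herr s hs₀)
      have hforcing := hτ₁ s hs.1
      rw [sub_zero] at hforcing
      linarith)
    (by linarith [(sqrt_le_iff.1 (hnorm τ₁ hτ₀₁)).2])
  exact (abs_le_sqrt_sum_sq (ξ · τhat) (mem_Icc.2 ⟨hi1, hik⟩)).trans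
    ((sqrt_le_left hε.le).2 (by linarith [hhat τhat le_rfl, ha_def]))

/-- for every `ε > 0` there is a time `τ̂ ≥ τ₀`, depending only on
`k, η, C₀, τ₀, ε`, such that every C¹ function `ξ` on `[τ₀,∞)` with zero sum, Euclidean
norm bounded by `C₀` and `‖ξ'(τ) - f(ξ(τ))‖ ≤ C₀ e^{-ητ}` satisfies
`max_{1≤i≤k} |ξᵢ(τ̂)| ≤ ε`. -/
theorem stmt17 (k : ℕ) (hk : 2 ≤ k) (η C₀ τ₀ : ℝ)
    (hη : 0 < η) (hC₀ : 0 < C₀) (hτ₀ : 0 ≤ τ₀) :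
    ∀ ε > 0, ∃ τhat : ℝ, τ₀ ≤ τhat ∧
      ∀ ξ ξ' : ℕ → ℝ → ℝ,
        (∀ i, 1 ≤ i → i ≤ k → ∀ τ : ℝ, τ₀ ≤ τ → HasDerivAt (ξ i) (ξ' i τ) τ) →
        (∀ τ : ℝ, τ₀ ≤ τ → ∑ i ∈ Finset.Icc 1 k, ξ i τ = 0) →
        (∀ τ : ℝ, τ₀ ≤ τ →
          Real.sqrt (∑ i ∈ Finset.Icc 1 k, (ξ i τ) ^ 2) ≤ C₀) →
        (∀ τ : ℝ, τ₀ ≤ τ →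
          Real.sqrt (∑ i ∈ Finset.Icc 1 k, (ξ' i τ - fP k (fun j => ξ j τ) i) ^ 2)
            ≤ C₀ * Real.exp (-η * τ)) →
        ∀ i, 1 ≤ i → i ≤ k → |ξ i τhat| ≤ ε :=
  stmt17_general k hk η C₀ τ₀ hη
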